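/- arXiv:1910.06714 — 2 statements merged into one kernel-verified Lean document; each statement's English description precedes it below -/
import Mathlib

section
/- Let A = A^c_q with q ≠ ±1 (so n ≥ 3). Every k-algebra automorphism ψ of A that maps each generator x_j to a linear combination of x_1,…,x_c must map each x_i to a nonzero scalar multiple of x_i itself. -/
noncomputable section

/-- The indecomposable module `k[x]/(x^t)` over the truncated polynomial ring. -/
abbrev Mt (k : Type) [Field k] (t : ℕ) : Type :=
  Polynomial k ⧸ Ideal.span {(Polynomial.X : Polynomial k) ^ t}

/-- Multiplication by `x` on `k[x]/(x^t)`, as a `k`-linear map. -/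
def xMul (k : Type) [Field k] (t : ℕ) : Mt k t →ₗ[k] Mt k t :=
  LinearMap.mulLeft k (Ideal.Quotient.mk _ Polynomial.X)

/-- The model module `⊕_{t=1}^{n} (k[x]/(x^t))^{d_t}`; here `t : Fin n` indexes the
block of size `t+1`, occurring with multiplicity `d t`. -/
abbrev MJ (k : Type) [Field k] (n : ℕ) (d : Fin n → ℕ) : Type :=
  ∀ t : Fin n, Fin (d t) → Mt k ((t : ℕ) + 1)

/-- The action of `x` on the model module `MJ k n d`. -/
def MJmap (k : Type) [Field k] (n : ℕ) (d : Fin n → ℕ) : MJ k n d →ₗ[k] MJ k n d where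
  toFun v t m := xMul k ((t : ℕ) + 1) (v t m)
  map_add' a b := by funext t m; exact (xMul k ((t : ℕ) + 1)).map_add (a t m) (b t m)
  map_smul' r a := by funext t m; exact (xMul k ((t : ℕ) + 1)).map_smul r (a t m)

/-- A `k`-vector space `V` with endomorphism `f` has Jordan type `[1]^{d 0} ⋯ [n]^{d (n-1)}`
if `(V, f)` is isomorphic to the model module `MJ k n d` with its `x`-action. -/
def HasJordanType {k : Type} [Field k] {V : Type} [AddCommGroup V] [Module k V]
    (n : ℕ) (f : V →ₗ[k] V) (d : Fin n → ℕ) : Prop :=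
  ∃ e : V ≃ₗ[k] MJ k n d, ∀ v, e (f v) = MJmap k n d (e v)

/-- The relations defining the quantum complete intersection `A_q^c`. -/
inductive QCIRel (k : Type) [Field k] (n c : ℕ) (q : k) :
    FreeAlgebra k (Fin c) → FreeAlgebra k (Fin c) → Prop
  | pow (i : Fin c) : QCIRel k n c q (FreeAlgebra.ι k i ^ n) 0
  | comm (i j : Fin c) (h : i < j) :
      QCIRel k n c q (FreeAlgebra.ι k i * FreeAlgebra.ι k j)
        (q • (FreeAlgebra.ι k j * FreeAlgebra.ι k i))

/-- The quantum complete intersection `A_q^c = k⟨x_1,…,x_c⟩/(x_i^n, x_i x_j - q x_j x_i)`. -/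
abbrev QCI (k : Type) [Field k] (n c : ℕ) (q : k) : Type := RingQuot (QCIRel k n c q)

/-- The generator `x_i` of `A_q^c`. -/
def QCI.X (k : Type) [Field k] (n c : ℕ) (q : k) (i : Fin c) : QCI k n c q :=
  RingQuot.mkAlgHom k (QCIRel k n c q) (FreeAlgebra.ι k i)

/-- The linear form `u_λ = λ_1 x_1 + ⋯ + λ_c x_c` in `A_q^c`. -/
def QCI.u (k : Type) [Field k] (n c : ℕ) (q : k) (lam : Fin c → k) : QCI k n c q :=
  ∑ i, lam i • QCI.X k n c q i

/-- `n' = n` if `char k = 0`, and `n' = n / gcd(n, char k)` otherwise. -/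
def nprime (k : Type) [Field k] (n : ℕ) : ℕ :=
  if ringChar k = 0 then n else n / Nat.gcd n (ringChar k)

/-- The Jacobson radical of `A_q^c`, as the two-sided ideal generated by `x_1, …, x_c`,
viewed as a `k`-subspace. -/
def QCI.rad (k : Type) [Field k] (n c : ℕ) (q : k) : Submodule k (QCI k n c q) :=
  Submodule.span k {a | ∃ (i : Fin c) (b b' : QCI k n c q), a = b * QCI.X k n c q i * b'}


/-! Write `ψ(x_j) = ∑ₐ α_{ja} x_a`. Comparing the coefficients of `x_a²` and of `x_b x_a`
(`a < b`) in `ψ(x_i) ψ(x_j) = q ψ(x_j) ψ(x_i)`, `i < j`, gives `(1 - q) α_{ia} α_{ja} = 0` and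
`(1 - q²) α_{ib} α_{ja} = 0`; these monomials are nonzero because `qⁿ = 1` and `q ≠ ±1` force
`n ≥ 3`. Hence the supports of the `ψ(x_j)`, nonempty as `ψ` is injective, are pairwise disjoint
and never cross, which forces `supp ψ(x_j) = {j}`. Coefficients are read off from an explicit
representation of `A` on functions of exponent vectors. -/

/-- Choosing a partner for each element gives a strictly monotone, hence identity, self-map. -/
theorem eq_of_rel_of_disjoint_of_monotone {ι : Type*} [LinearOrder ι] [Finite ι]
    {P : ι → ι → Prop} (hex : ∀ j, ∃ a, P j a) (hdisj : ∀ i j a, P i a → P j a → i = j)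
    (hmono : ∀ i j a b, i < j → a < b → P i b → P j a → False) {j a : ι} (h : P j a) :
    a = j := by
  choose σ hσ using hex
  have hσinj : Function.Injective σ := fun i j hij => hdisj i j (σ i) (hσ i) (hij ▸ hσ j)
  have hσmono : StrictMono σ := fun i j hij =>
    (hσinj.ne hij.ne).lt_or_gt.resolve_right fun hgt => hmono i j _ _ hij hgt (hσ i) (hσ j)
  obtain ⟨j', rfl⟩ := Finite.surjective_of_injective hσinj a
  rw [hdisj j j' _ h (hσ j'), hσmono.apply_eq]

namespace QCI

variable {k : Type} [Field k] {n c : ℕ} {q : k}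

lemma X_mul_X_of_lt {i j : Fin c} (h : i < j) :
    X k n c q i * X k n c q j = q • (X k n c q j * X k n c q i) := by
  simpa only [X, map_mul, map_smul] using
    RingQuot.mkAlgHom_rel k (QCIRel.comm (n := n) (q := q) i j h)

def qShift (i : Fin c) (m : Fin c → ℕ) : ℕ := ∑ l ∈ Finset.Ioi i, m l

lemma qShift_add (i : Fin c) (m m' : Fin c → ℕ) :
    qShift i (m + m') = qShift i m + qShift i m' :=
  Finset.sum_add_distrib

lemma qShift_single (i j : Fin c) : qShift i (Pi.single j 1) = if i < j then 1 else 0 := by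
  simp [qShift, Pi.single_apply]

lemma qShift_sub_single_of_le {i j : Fin c} (h : i ≤ j) (m : Fin c → ℕ) :
    qShift j (m - Pi.single i 1) = qShift j m :=
  Finset.sum_congr rfl fun l hl => by
    simp [(h.trans_lt (Finset.mem_Ioi.mp hl)).ne']

lemma qShift_sub_single_add_one {i j : Fin c} (h : i < j) {m : Fin c → ℕ} (hm : 0 < m j) :
    qShift i (m - Pi.single j 1) + 1 = qShift i m := by
  have hj : j ∈ Finset.Ioi i := Finset.mem_Ioi.mpr h
  have hrest : ∑ l ∈ (Finset.Ioi i).erase j, (m - Pi.single j 1 : Fin c → ℕ) l =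
      ∑ l ∈ (Finset.Ioi i).erase j, m l :=
    Finset.sum_congr rfl fun l hl => by simp [Finset.ne_of_mem_erase hl]
  rw [qShift, qShift, ← Finset.add_sum_erase _ _ hj, ← Finset.add_sum_erase _ m hj, hrest]
  simp only [Pi.sub_apply, Pi.single_eq_same]
  omega

/-- A function `f` on exponent vectors stands for `∑ₘ f m • x_c^{m_c} ⋯ x_1^{m_1}` and
`mulXOp n q i` is left multiplication by `x_i`: moving `x_i` past each `x_l`, `l > i`,
costs a factor `q`, and monomials with an exponent `≥ n` vanish. -/
def mulXOp (n : ℕ) (q : k) (i : Fin c) : Module.End k ((Fin c → ℕ) → k) where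
  toFun f m := if 0 < m i ∧ m i < n then q ^ qShift i m * f (m - Pi.single i 1) else 0
  map_add' f g := by
    funext m
    split_ifs <;> simp [*, mul_add]
  map_smul' r f := by
    funext m
    split_ifs <;> simp [*, mul_left_comm]

lemma mulXOp_apply (i : Fin c) (f : (Fin c → ℕ) → k) (m : Fin c → ℕ) :
    mulXOp n q i f m =
      if 0 < m i ∧ m i < n then q ^ qShift i m * f (m - Pi.single i 1) else 0 :=
  rfl

lemma mulXOp_pow_apply_of_lt (i : Fin c) {t : ℕ} (f : (Fin c → ℕ) → k) {m : Fin c → ℕ}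
    (hm : m i < t) : (mulXOp n q i ^ t) f m = 0 := by
  induction t generalizing m with
  | zero => omega
  | succ t ih =>
    rw [pow_succ', Module.End.mul_apply, mulXOp_apply]
    split_ifs with h
    · rw [ih (by simp; omega), mul_zero]
    · rfl

lemma mulXOp_pow_self [NeZero n] (i : Fin c) : mulXOp n q i ^ n = 0 := by
  ext f m
  obtain ⟨t, rfl⟩ := Nat.exists_eq_succ_of_ne_zero (NeZero.ne n)
  rw [pow_succ', Module.End.mul_apply, mulXOp_apply]
  split_ifs with h
  · rw [mulXOp_pow_apply_of_lt i f (by simp; omega), mul_zero]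
    rfl
  · rfl

lemma mulXOp_mul_mulXOp_of_lt {i j : Fin c} (hij : i < j) :
    mulXOp n q i * mulXOp n q j = q • (mulXOp n q j * mulXOp n q i) := by
  ext f m
  simp only [Module.End.mul_apply, LinearMap.smul_apply, Pi.smul_apply, mulXOp_apply,
    Pi.sub_apply, Pi.single_apply, hij.ne, hij.ne', if_false, tsub_zero, smul_eq_mul]
  split_ifs with hi hj hj <;> try simp
  rw [← qShift_sub_single_add_one hij hj.1, qShift_sub_single_of_le hij.le, tsub_right_comm]
  ring

def rep [NeZero n] : QCI k n c q →ₐ[k] Module.End k ((Fin c → ℕ) → k) :=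
  RingQuot.liftAlgHom k ⟨FreeAlgebra.lift k (mulXOp n q), by
    rintro _ _ (⟨i⟩ | ⟨i, j, hij⟩)
    · simp [mulXOp_pow_self]
    · simp [mulXOp_mul_mulXOp_of_lt hij]⟩

lemma rep_X [NeZero n] (i : Fin c) : rep (X k n c q i) = mulXOp n q i := by
  rw [X, rep, RingQuot.liftAlgHom_mkAlgHom_apply, FreeAlgebra.lift_ι_apply]

/-- `coeff m y` is the coefficient of `x_c^{m_c} ⋯ x_1^{m_1}` in `y`, read off from `y • 1`. -/
def coeff [NeZero n] (m : Fin c → ℕ) : QCI k n c q →ₗ[k] k :=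
  LinearMap.proj m ∘ₗ LinearMap.applyₗ (Pi.single 0 1) ∘ₗ rep.toLinearMap

lemma coeff_one [NeZero n] (m : Fin c → ℕ) :
    coeff m (1 : QCI k n c q) = if m = 0 then 1 else 0 := by
  simp [coeff, Pi.single_apply]

lemma coeff_X_mul [NeZero n] (i : Fin c) (m : Fin c → ℕ) (y : QCI k n c q) :
    coeff m (X k n c q i * y) =
      if 0 < m i ∧ m i < n then q ^ qShift i m * coeff (m - Pi.single i 1) y else 0 := by
  simp [coeff, rep_X, mulXOp_apply]

lemma coeff_X_mul_of_apply_eq_zero [NeZero n] {i : Fin c} {m : Fin c → ℕ} (hm : m i = 0)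
    (y : QCI k n c q) : coeff m (X k n c q i * y) = 0 := by
  simp [coeff_X_mul, hm]

lemma coeff_single_add_X_mul [NeZero n] (i : Fin c) {m : Fin c → ℕ} (hm : m i + 1 < n)
    (y : QCI k n c q) :
    coeff (Pi.single i 1 + m) (X k n c q i * y) =
      q ^ qShift i (Pi.single i 1 + m) * coeff m y := by
  rw [coeff_X_mul, if_pos (by simp; omega), add_tsub_cancel_left]

lemma coeff_u_mul [NeZero n] (α : Fin c → k) (m : Fin c → ℕ) (y : QCI k n c q) :
    coeff m (u k n c q α * y) = ∑ s, α s * coeff m (X k n c q s * y) := by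
  simp [u, Finset.sum_mul]

lemma coeff_single_u [NeZero n] (hn : 2 ≤ n) (α : Fin c → k) (a : Fin c) :
    coeff (Pi.single a 1) (u k n c q α) = α a := by
  rw [← mul_one (u k n c q α), coeff_u_mul, Fintype.sum_eq_single a fun s hs => by
      rw [coeff_X_mul_of_apply_eq_zero (by simp [hs]), mul_zero],
    ← add_zero (Pi.single a 1), coeff_single_add_X_mul a (by simp; omega), coeff_one]
  simp [qShift_single]

lemma X_ne_zero (hn : 2 ≤ n) (i : Fin c) : X k n c q i ≠ 0 := by
  have : NeZero n := ⟨by omega⟩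
  intro h
  have := coeff_single_u (q := q) hn (Pi.single i 1) i
  simp_all [u, Pi.single_apply]

lemma coeff_single_add_single_u_mul_u [NeZero n] (hn : 3 ≤ n) (α β : Fin c → k) (a : Fin c) :
    coeff (Pi.single a 1 + Pi.single a 1) (u k n c q α * u k n c q β) = α a * β a := by
  rw [coeff_u_mul, Fintype.sum_eq_single a fun s hs => by
      rw [coeff_X_mul_of_apply_eq_zero (by simp [hs]), mul_zero],
    coeff_single_add_X_mul a (by simp; omega), coeff_single_u (by omega)]
  simp [qShift_add, qShift_single]

lemma coeff_single_add_single_u_mul_u_of_lt [NeZero n] (hn : 2 ≤ n) (α β : Fin c → k)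
    {a b : Fin c} (hab : a < b) :
    coeff (Pi.single a 1 + Pi.single b 1) (u k n c q α * u k n c q β) =
      q * α a * β b + α b * β a := by
  rw [coeff_u_mul, Fintype.sum_eq_add a b hab.ne fun s hs => by
      rw [coeff_X_mul_of_apply_eq_zero (by simp [hs.1, hs.2]), mul_zero],
    coeff_single_add_X_mul a (by simp [hab.ne']; omega), add_comm (Pi.single a 1),
    coeff_single_add_X_mul b (by simp [hab.ne]; omega), coeff_single_u hn, coeff_single_u hn]
  simp [qShift_add, qShift_single, hab, hab.not_gt]
  ring

lemma mul_eq_zero_of_u_mul_u_eq_smul (hn : 3 ≤ n) (hq1 : q ≠ 1) {α β : Fin c → k}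
    (h : u k n c q α * u k n c q β = q • (u k n c q β * u k n c q α)) (a : Fin c) :
    α a * β a = 0 := by
  have : NeZero n := ⟨by omega⟩
  have hcoeff := congrArg (coeff (Pi.single a 1 + Pi.single a 1)) h
  rw [map_smul, coeff_single_add_single_u_mul_u hn, coeff_single_add_single_u_mul_u hn,
    smul_eq_mul] at hcoeff
  have : (1 - q) * (α a * β a) = 0 := by linear_combination hcoeff
  exact (mul_eq_zero.mp this).resolve_left (sub_ne_zero.mpr hq1.symm)

lemma mul_eq_zero_of_u_mul_u_eq_smul_of_lt (hn : 2 ≤ n) (hq2 : q ^ 2 ≠ 1) {α β : Fin c → k}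
    (h : u k n c q α * u k n c q β = q • (u k n c q β * u k n c q α)) {a b : Fin c}
    (hab : a < b) : α b * β a = 0 := by
  have : NeZero n := ⟨by omega⟩
  have hcoeff := congrArg (coeff (Pi.single a 1 + Pi.single b 1)) h
  rw [map_smul, coeff_single_add_single_u_mul_u_of_lt hn _ _ hab,
    coeff_single_add_single_u_mul_u_of_lt hn _ _ hab, smul_eq_mul] at hcoeff
  have : (1 - q ^ 2) * (α b * β a) = 0 := by linear_combination hcoeff
  exact (mul_eq_zero.mp this).resolve_left (sub_ne_zero.mpr (Ne.symm hq2))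

end QCI

lemma nprime_dvd (k : Type) [Field k] (n : ℕ) : nprime k n ∣ n := by
  unfold nprime
  split_ifs
  · exact dvd_rfl
  · exact Nat.div_dvd_of_dvd (Nat.gcd_dvd_left n (ringChar k))

lemma three_le_of_isPrimitiveRoot_nprime {k : Type} [Field k] {n : ℕ} {q : k} (hn : 2 ≤ n)
    (hq : IsPrimitiveRoot q (nprime k n)) (hq2 : q ^ 2 ≠ 1) : 3 ≤ n := by
  have hqn : q ^ n = 1 := (hq.pow_eq_one_iff_dvd n).mpr (nprime_dvd k n)
  by_contra hlt
  obtain rfl : n = 2 := by omega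
  exact hq2 hqn

theorem stmt17_general (k : Type) [Field k] (n c : ℕ) (hn : 2 ≤ n) (q : k)
    (hq : IsPrimitiveRoot q (nprime k n)) (hq1 : q ≠ 1) (hqm1 : q ≠ -1)
    (psi : QCI k n c q ≃ₐ[k] QCI k n c q)
    (hpsi : ∀ j : Fin c, ∃ α : Fin c → k,
      psi (QCI.X k n c q j) = ∑ i, α i • QCI.X k n c q i) :
    ∀ i : Fin c, ∃ α : k, α ≠ 0 ∧ psi (QCI.X k n c q i) = α • QCI.X k n c q i := by
  have hq2 : q ^ 2 ≠ 1 := sq_ne_one_iff.mpr ⟨hq1, hqm1⟩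
  have hn3 : 3 ≤ n := three_le_of_isPrimitiveRoot_nprime hn hq hq2
  choose α hα using hpsi
  have hcomm {i j : Fin c} (hij : i < j) :
      QCI.u k n c q (α i) * QCI.u k n c q (α j) =
        q • (QCI.u k n c q (α j) * QCI.u k n c q (α i)) := by
    simp only [QCI.u, ← hα, ← map_mul, ← map_smul, QCI.X_mul_X_of_lt hij]
  have hex (j : Fin c) : ∃ a, α j a ≠ 0 := by
    refine Function.ne_iff.mp fun h => QCI.X_ne_zero hn j (psi.injective ?_)
    simp [hα, h]
  have hdisj (i j a : Fin c) (hi : α i a ≠ 0) (hj : α j a ≠ 0) : i = j := by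
    by_contra hne
    rcases lt_or_gt_of_ne hne with hij | hji
    · exact mul_ne_zero hi hj (QCI.mul_eq_zero_of_u_mul_u_eq_smul hn3 hq1 (hcomm hij) a)
    · exact mul_ne_zero hj hi (QCI.mul_eq_zero_of_u_mul_u_eq_smul hn3 hq1 (hcomm hji) a)
  have hdiag {i a : Fin c} (h : α i a ≠ 0) : a = i :=
    eq_of_rel_of_disjoint_of_monotone hex hdisj (fun _ _ _ _ hij hab hi hj => mul_ne_zero hi hj
      (QCI.mul_eq_zero_of_u_mul_u_eq_smul_of_lt hn hq2 (hcomm hij) hab)) h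
  intro i
  obtain ⟨a, ha⟩ := hex i
  refine ⟨α i i, hdiag ha ▸ ha, ?_⟩
  rw [hα, Fintype.sum_eq_single i fun b hb => by rw [not_not.mp (mt hdiag hb), zero_smul]]

theorem stmt17 (k : Type) [Field k] (n c : ℕ) (hn : 2 ≤ n) (hc : 2 ≤ c) (q : k)
    (hq : IsPrimitiveRoot q (nprime k n)) (hq1 : q ≠ 1) (hqm1 : q ≠ -1)
    (psi : QCI k n c q ≃ₐ[k] QCI k n c q)
    (hpsi : ∀ j : Fin c, ∃ α : Fin c → k,
      psi (QCI.X k n c q j) = ∑ i, α i • QCI.X k n c q i) :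
    ∀ i : Fin c, ∃ α : k, α ≠ 0 ∧ psi (QCI.X k n c q i) = α • QCI.X k n c q i :=
  stmt17_general k n c hn q hq hq1 hqm1 psi hpsi

end
end

section
/- Let M be a d-dimensional module over A^c_q and 0 < g ≤ d. If the binomial coefficient squared (d choose g)^2 < c, then the linear operators u_λ : M → M (λ ∈ k^c nonzero) cannot all have rank exactly g. Consequently, there is no d-dimensional A^c_q-module of constant rank g > 0 when (d choose g)^2 < c. -/
noncomputable section

/-! If `u_λ` has rank `g > 0` for every `λ ≠ 0`, then `λ ↦ ρ(u_λ)` is injective, so the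
images of `x_1, …, x_c` are linearly independent in `End V` and `c ≤ d²`. For `0 < g < d`
this contradicts `d ≤ (d choose g)`. For `g = d`, each `x_i` acts nilpotently, so its rank
is `< d`. -/

theorem Nat.le_choose_of_pos_of_lt {d g : ℕ} (hg : 0 < g) (hgd : g < d) : d ≤ d.choose g := by
  induction d generalizing g with
  | zero => omega
  | succ d ih =>
    obtain ⟨g, rfl⟩ : ∃ g', g = g' + 1 := ⟨g - 1, by omega⟩
    rw [Nat.choose_succ_succ']
    rcases Nat.eq_zero_or_pos g with rfl | hg
    · rw [Nat.choose_zero_right, Nat.choose_one_right, add_comm]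
    · have := ih hg (by omega)
      have := Nat.choose_pos (show g + 1 ≤ d by omega)
      omega

theorem Module.End.finrank_range_lt_of_isNilpotent {k V : Type*} [Field k] [AddCommGroup V]
    [Module k V] [FiniteDimensional k V] [Nontrivial V] {f : Module.End k V}
    (hf : IsNilpotent f) : Module.finrank k (LinearMap.range f) < Module.finrank k V := by
  refine (Submodule.finrank_le _).lt_of_ne fun h => hf.not_isUnit ?_
  have hsurj : Function.Surjective f :=
    LinearMap.range_eq_top.1 (Submodule.eq_top_of_finrank_eq h)
  exact (Module.End.isUnit_iff f).2
    ⟨LinearMap.injective_iff_surjective.2 hsurj, hsurj⟩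

namespace QCI

variable {k : Type} [Field k] {n c : ℕ} {q : k}

theorem isNilpotent_X (i : Fin c) : IsNilpotent (QCI.X k n c q i) := by
  refine ⟨n, ?_⟩
  rw [QCI.X, ← map_pow, ← map_zero (RingQuot.mkAlgHom k (QCIRel k n c q))]
  exact RingQuot.mkAlgHom_rel k (QCIRel.pow i)

theorem u_single (i : Fin c) : QCI.u k n c q (Pi.single i 1) = QCI.X k n c q i := by
  rw [QCI.u, Finset.sum_eq_single i (fun j _ hj => by simp [hj]) (by simp)]
  simp

theorem map_u {B : Type*} [Semiring B] [Algebra k B] (rho : QCI k n c q →ₐ[k] B)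
    (lam : Fin c → k) : rho (QCI.u k n c q lam) = ∑ i, lam i • rho (QCI.X k n c q i) := by
  simp [QCI.u, map_sum]

end QCI

theorem stmt19_general (k : Type) [Field k] (n c : ℕ) (q : k)
    (dd g : ℕ) (hg0 : 0 < g) (hgd : g ≤ dd)
    (hsmall : (Nat.choose dd g) ^ 2 < c)
    (V : Type) [AddCommGroup V] [Module k V]
    (hV : Module.finrank k V = dd)
    (rho : QCI k n c q →ₐ[k] Module.End k V) :
    ¬ ∀ lam : Fin c → k, lam ≠ 0 →
        Module.finrank k (LinearMap.range (rho (QCI.u k n c q lam))) = g := by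
  intro hrank
  have hdim : 0 < Module.finrank k V := hV ▸ hg0.trans_le hgd
  have : FiniteDimensional k V := Module.finite_of_finrank_pos hdim
  rcases hgd.lt_or_eq with hlt | rfl
  · have hind : LinearIndependent k fun i => rho (QCI.X k n c q i) := by
      refine Fintype.linearIndependent_iff.2 fun lam hsum => congrFun ?_
      by_contra hlam
      have := hrank lam hlam
      rw [QCI.map_u, hsum, LinearMap.range_zero, finrank_bot] at this
      omega
    have hc : c ≤ dd * dd := by
      simpa [Module.finrank_linearMap, hV] using hind.fintype_card_le_finrank
    have hchoose := Nat.le_choose_of_pos_of_lt hg0 hlt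
    nlinarith
  · have : Nontrivial V := Module.nontrivial_of_finrank_pos hdim
    let i : Fin c := ⟨0, Nat.zero_lt_of_lt hsmall⟩
    have hrank_i := hrank (Pi.single i 1) (by simp)
    rw [QCI.u_single] at hrank_i
    have hlt := Module.End.finrank_range_lt_of_isNilpotent ((QCI.isNilpotent_X i).map rho)
    exact hlt.ne (hrank_i.trans hV.symm)

theorem stmt19 (k : Type) [Field k] (n c : ℕ) (hn : 2 ≤ n) (hc : 2 ≤ c) (q : k)
    (hq : IsPrimitiveRoot q (nprime k n)) (dd g : ℕ) (hg0 : 0 < g) (hgd : g ≤ dd)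
    (hsmall : (Nat.choose dd g) ^ 2 < c)
    (V : Type) [AddCommGroup V] [Module k V] [FiniteDimensional k V]
    (hV : Module.finrank k V = dd)
    (rho : QCI k n c q →ₐ[k] Module.End k V) :
    ¬ ∀ lam : Fin c → k, lam ≠ 0 →
        Module.finrank k (LinearMap.range (rho (QCI.u k n c q lam))) = g :=
  stmt19_general k n c q dd g hg0 hgd hsmall V hV rho

end
end
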